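/- Let μ be a compactly supported Borel probability measure on ℝ^d satisfying μ(B(x,r)) ≤ C r^s for all x ∈ ℝ^d and r > 0, where 0 < s ≤ d. Then for every f ∈ L²(μ) and every R ≥ 1, ∫_{|ξ| ≤ R} |(f dμ)^∧(ξ)|² dξ ≲ R^{d-s} ‖f‖²_{L²(μ)}, with implied constant independent of f and R. -/

import Mathlib

open MeasureTheory Real Set Metric
open scoped ENNReal RealInnerProductSpace

noncomputable section

/-- Euclidean space `ℝ^d`. -/
abbrev Euc (d : ℕ) := EuclideanSpace ℝ (Fin d)

/-- `e(r) = exp(2πir)`. -/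
noncomputable def eC (r : ℝ) : ℂ := Complex.exp (((2 * Real.pi * r : ℝ) : ℂ) * Complex.I)

/-- The normalized (probability) surface measure on the unit sphere `S^{d-1}`,
viewed as a measure on `ℝ^d`. -/
noncomputable def unitSphere (d : ℕ) : Measure (Euc d) :=
  (((volume : Measure (Euc d)).toSphere Set.univ)⁻¹) •
    Measure.map Subtype.val (volume : Measure (Euc d)).toSphere

/-- The normalized surface measure `ω_r` on the sphere `r S^{d-1}`. -/
noncomputable def sphM (d : ℕ) (r : ℝ) : Measure (Euc d) :=
  Measure.map (fun x => r • x) (unitSphere d)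

/-- The surface area `|S^{d-1}|` of the unit sphere. -/
noncomputable def sphArea (d : ℕ) : ℝ :=
  (((volume : Measure (Euc d)).toSphere) Set.univ).toReal

/-- The Fourier transform `μ̂(ξ) = ∫ e^{-2πi x·ξ} dμ(x)` of a measure on `ℝ^d`. -/
noncomputable def ftM {d : ℕ} (μ : Measure (Euc d)) (ξ : Euc d) : ℂ :=
  ∫ x, eC (-⟪x, ξ⟫) ∂μ

/-- The Fourier transform `(f dμ)^∧(ξ) = ∫ e^{-2πi x·ξ} f(x) dμ(x)`. -/
noncomputable def ftF {d : ℕ} (μ : Measure (Euc d)) (f : Euc d → ℂ) (ξ : Euc d) : ℂ :=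
  ∫ x, eC (-⟪x, ξ⟫) * f x ∂μ


/-! Since `exp (-π |ξ|² / R²) ≥ e^{-π}` on `B(0, R)`, it suffices to bound
`∫ exp (-π |ξ|² / R²) |(f dμ)^∧(ξ)|² dξ`. Expanding the square and integrating in `ξ` first
(the Gaussian is its own Fourier transform), this equals
`∫∫ f(x) conj (f(y)) R^d exp (-π R² |x - y|²) dμ(x) dμ(y)`, which Schur's test bounds by
`R^d ‖f‖²_{L²(μ)} sup_x ∫ exp (-π R² |x - y|²) dμ(y)`. Cutting `ℝ^d` into the shells
`k ≤ R |x - y| < k + 1` and applying the Frostman bound to the balls `B(x, (k + 1) / R)`, the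
supremum is at most `C R^{-s} ∑_k e^{-π k²} (k + 1)^s`. -/

lemma norm_eC (r : ℝ) : ‖eC r‖ = 1 := Complex.norm_exp_ofReal_mul_I _

lemma conj_eC (r : ℝ) : starRingEnd ℂ (eC r) = eC (-r) := by
  rw [eC, ← Complex.exp_conj, map_mul, Complex.conj_I, Complex.conj_ofReal, eC]
  push_cast
  ring_nf

lemma eC_mul_eC (a b : ℝ) : eC a * eC b = eC (a + b) := by
  rw [eC, eC, eC, ← Complex.exp_add]
  push_cast
  ring_nf

@[fun_prop]
lemma continuous_eC : Continuous eC := by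
  unfold eC
  fun_prop

lemma integral_gaussian_mul_eC (d : ℕ) {R : ℝ} (hR : 0 < R) (v : Euc d) :
    ∫ ξ : Euc d, (rexp (-(π / R ^ 2) * ‖ξ‖ ^ 2) : ℂ) * eC (-⟪v, ξ⟫)
      = (R ^ d : ℝ) * Complex.exp (-(π * R ^ 2 * ‖v‖ ^ 2) : ℝ) := by
  have hb : 0 < ((π / R ^ 2 : ℝ) : ℂ).re := by rw [Complex.ofReal_re]; positivity
  have hR2 : (R : ℂ) ^ 2 ≠ 0 := pow_ne_zero 2 (Complex.ofReal_ne_zero.mpr hR.ne')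
  have hπ : (π : ℂ) ≠ 0 := Complex.ofReal_ne_zero.mpr pi_ne_zero
  have hscale : (π : ℂ) / ((π / R ^ 2 : ℝ) : ℂ) = ((R ^ 2 : ℝ) : ℂ) := by
    push_cast
    field_simp
  have hpow : (((R ^ 2 : ℝ) : ℂ)) ^ ((d : ℂ) / 2) = ((R ^ d : ℝ) : ℂ) := by
    rw [show (d : ℂ) / 2 = ((d / 2 : ℝ) : ℂ) by push_cast; ring,
      ← Complex.ofReal_cpow (by positivity), ← Real.rpow_natCast R 2, ← Real.rpow_mul hR.le,
      ← Real.rpow_natCast R d]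
    congr 2
    ring
  calc ∫ ξ : Euc d, (rexp (-(π / R ^ 2) * ‖ξ‖ ^ 2) : ℂ) * eC (-⟪v, ξ⟫)
      = ∫ ξ : Euc d, Complex.exp (-((π / R ^ 2 : ℝ) : ℂ) * ‖ξ‖ ^ 2
          + (-(2 * π) * Complex.I) * ⟪v, ξ⟫) := by
        congr 1 with ξ
        rw [eC, Complex.ofReal_exp, ← Complex.exp_add]
        push_cast
        ring_nf
    _ = _ := by
        rw [GaussianFourier.integral_cexp_neg_mul_sq_norm_add hb, finrank_euclideanSpace_fin,
          hscale, hpow]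
        congr 2
        push_cast
        field_simp
        rw [Complex.I_sq]
        ring

def gaussianLayerSum (s : ℝ) : ℝ :=
  ∑' k : ℕ, rexp (-(π * k ^ 2)) * (k + 1) ^ s

lemma summable_gaussianLayerSum (s : ℝ) :
    Summable fun k : ℕ => rexp (-(π * k ^ 2)) * (k + 1) ^ s := by
  have hexp : Summable fun k : ℕ => ((k + 1 : ℕ) : ℝ) ^ ⌈s⌉₊ * rexp (-1 * (k + 1 : ℕ)) :=
    (summable_nat_add_iff 1).mpr (summable_pow_mul_exp_neg_nat_mul _ one_pos)
  refine (hexp.mul_left (rexp 1)).of_nonneg_of_le (fun k => by positivity) fun k => ?_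
  have hk : (k : ℝ) ≤ k ^ 2 := by
    exact_mod_cast Nat.le_self_pow two_ne_zero k
  have hpow : ((k : ℝ) + 1) ^ s ≤ ((k : ℝ) + 1) ^ ⌈s⌉₊ := by
    rw [← Real.rpow_natCast]
    exact Real.rpow_le_rpow_of_exponent_le (by linarith [k.cast_nonneg (α := ℝ)]) (Nat.le_ceil s)
  calc rexp (-(π * k ^ 2)) * (k + 1) ^ s ≤ rexp (1 + -1 * (k + 1)) * (k + 1) ^ ⌈s⌉₊ := by
        gcongr
        nlinarith [Real.pi_gt_three]
    _ = _ := by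
        rw [Real.exp_add]
        push_cast
        ring

lemma one_le_gaussianLayerSum (s : ℝ) : 1 ≤ gaussianLayerSum s := by
  simpa [gaussianLayerSum] using (summable_gaussianLayerSum s).le_tsum 0 fun k _ => by positivity

lemma gaussian_le_tsum_indicator_closedBall {α : Type*} [PseudoMetricSpace α] {R : ℝ}
    (hR : 0 < R) (x y : α) :
    ENNReal.ofReal (rexp (-(π * R ^ 2 * dist x y ^ 2)))
      ≤ ∑' k : ℕ, (closedBall x ((k + 1) / R)).indicator
          (fun _ => ENNReal.ofReal (rexp (-(π * k ^ 2)))) y := by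
  set k := ⌊R * dist x y⌋₊
  have hk : (k : ℝ) ≤ R * dist x y := Nat.floor_le (by positivity)
  have hy : y ∈ closedBall x ((k + 1) / R) := by
    rw [mem_closedBall, dist_comm, le_div_iff₀ hR, mul_comm]
    exact (Nat.lt_floor_add_one _).le
  refine le_trans ?_ (ENNReal.le_tsum k)
  rw [indicator_of_mem hy]
  refine ENNReal.ofReal_le_ofReal (Real.exp_le_exp.mpr ?_)
  have hsq : (k : ℝ) ^ 2 ≤ (R * dist x y) ^ 2 := pow_le_pow_left₀ k.cast_nonneg hk 2
  nlinarith [Real.pi_pos]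

lemma lintegral_gaussian_le_of_frostman {α : Type*} [PseudoMetricSpace α] [MeasurableSpace α]
    [OpensMeasurableSpace α] {μ : Measure α} {s C : ℝ} (hC : 0 ≤ C)
    (hfrost : ∀ (x : α) (r : ℝ), 0 < r → μ (closedBall x r) ≤ ENNReal.ofReal (C * r ^ s))
    {R : ℝ} (hR : 0 < R) (x : α) :
    ∫⁻ y, ENNReal.ofReal (rexp (-(π * R ^ 2 * dist x y ^ 2))) ∂μ
      ≤ ENNReal.ofReal (C * gaussianLayerSum s / R ^ s) :=
  calc ∫⁻ y, ENNReal.ofReal (rexp (-(π * R ^ 2 * dist x y ^ 2))) ∂μ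
      ≤ ∑' k : ℕ, ∫⁻ y, (closedBall x ((k + 1) / R)).indicator
          (fun _ => ENNReal.ofReal (rexp (-(π * k ^ 2)))) y ∂μ := by
        rw [← lintegral_tsum fun k =>
          (measurable_const.indicator measurableSet_closedBall).aemeasurable]
        exact lintegral_mono (gaussian_le_tsum_indicator_closedBall hR x)
    _ ≤ ∑' k : ℕ,
          ENNReal.ofReal (rexp (-(π * k ^ 2))) * ENNReal.ofReal (C * ((k + 1) / R) ^ s) := by
        refine ENNReal.tsum_le_tsum fun k => ?_
        rw [lintegral_indicator_const measurableSet_closedBall]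
        gcongr
        exact hfrost x _ (by positivity)
    _ = ENNReal.ofReal (∑' k : ℕ, C / R ^ s * (rexp (-(π * k ^ 2)) * (k + 1) ^ s)) := by
        rw [ENNReal.ofReal_tsum_of_nonneg (fun k => by positivity)
          ((summable_gaussianLayerSum s).mul_left _)]
        congr 1 with k
        rw [← ENNReal.ofReal_mul (by positivity), Real.div_rpow (by positivity) hR.le]
        ring_nf
    _ = ENNReal.ofReal (C * gaussianLayerSum s / R ^ s) := by
        rw [tsum_mul_left, gaussianLayerSum]
        ring_nf

lemma two_mul_enorm_mul_enorm_le {E : Type*} [NormedAddCommGroup E] (a b : E) :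
    2 * ‖a‖ₑ * ‖b‖ₑ ≤ ‖a‖ₑ ^ 2 + ‖b‖ₑ ^ 2 := by
  simp only [enorm_eq_nnnorm]
  exact_mod_cast two_mul_le_add_sq ‖a‖₊ ‖b‖₊

lemma lintegral_enorm_sq_mul_kernel_le {α E : Type*} [MeasurableSpace α]
    [NormedAddCommGroup E] {μ : Measure α} [SFinite μ] {f : α → E}
    (hf : AEStronglyMeasurable f μ) {k : α → α → ℝ≥0∞} (hk : Measurable (Function.uncurry k))
    {B : ℝ≥0∞} (hB : ∀ x, ∫⁻ y, k x y ∂μ ≤ B) :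
    ∫⁻ p, ‖f p.1‖ₑ ^ 2 * k p.1 p.2 ∂(μ.prod μ) ≤ B * ∫⁻ x, ‖f x‖ₑ ^ 2 ∂μ :=
  calc ∫⁻ p, ‖f p.1‖ₑ ^ 2 * k p.1 p.2 ∂(μ.prod μ)
      = ∫⁻ x, ‖f x‖ₑ ^ 2 * ∫⁻ y, k x y ∂μ ∂μ := by
        rw [lintegral_prod (fun p => ‖f p.1‖ₑ ^ 2 * k p.1 p.2)
          ((hf.enorm.pow_const 2).comp_fst.mul hk.aemeasurable)]
        congr 1 with x
        have hkx : Measurable (k x) := hk.comp measurable_prodMk_left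
        dsimp only
        exact lintegral_const_mul _ hkx
    _ ≤ ∫⁻ x, ‖f x‖ₑ ^ 2 * B ∂μ := lintegral_mono fun x => mul_le_mul_right (hB x) _
    _ = B * ∫⁻ x, ‖f x‖ₑ ^ 2 ∂μ := by
        rw [lintegral_mul_const'' _ (hf.enorm.pow_const 2), mul_comm]

lemma lintegral_enorm_mul_enorm_mul_kernel_le {α E : Type*} [MeasurableSpace α]
    [NormedAddCommGroup E] {μ : Measure α} [SFinite μ] {f : α → E}
    (hf : AEStronglyMeasurable f μ) {k : α → α → ℝ≥0∞} (hk : Measurable (Function.uncurry k))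
    (hk_symm : ∀ x y, k x y = k y x) {B : ℝ≥0∞} (hB : ∀ x, ∫⁻ y, k x y ∂μ ≤ B) :
    ∫⁻ p, ‖f p.1‖ₑ * ‖f p.2‖ₑ * k p.1 p.2 ∂(μ.prod μ) ≤ B * ∫⁻ x, ‖f x‖ₑ ^ 2 ∂μ := by
  have hswap : ∫⁻ p, ‖f p.2‖ₑ ^ 2 * k p.1 p.2 ∂(μ.prod μ)
      = ∫⁻ p, ‖f p.1‖ₑ ^ 2 * k p.1 p.2 ∂(μ.prod μ) := by
    rw [← lintegral_prod_swap]
    simp only [Prod.fst_swap, Prod.snd_swap, hk_symm]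
  refine (ENNReal.mul_le_mul_iff_right two_ne_zero ENNReal.ofNat_ne_top).mp ?_
  calc 2 * ∫⁻ p, ‖f p.1‖ₑ * ‖f p.2‖ₑ * k p.1 p.2 ∂(μ.prod μ)
      = ∫⁻ p, 2 * ‖f p.1‖ₑ * ‖f p.2‖ₑ * k p.1 p.2 ∂(μ.prod μ) := by
        rw [← lintegral_const_mul' _ _ ENNReal.ofNat_ne_top]
        simp only [mul_assoc]
    _ ≤ ∫⁻ p, ‖f p.1‖ₑ ^ 2 * k p.1 p.2 + ‖f p.2‖ₑ ^ 2 * k p.1 p.2 ∂(μ.prod μ) := by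
        refine lintegral_mono fun p => ?_
        rw [← add_mul]
        gcongr
        exact two_mul_enorm_mul_enorm_le _ _
    _ = 2 * ∫⁻ p, ‖f p.1‖ₑ ^ 2 * k p.1 p.2 ∂(μ.prod μ) := by
        rw [lintegral_add_left' (f := fun p : α × α => ‖f p.1‖ₑ ^ 2 * k p.1 p.2)
          ((hf.enorm.pow_const 2).comp_fst.mul hk.aemeasurable), hswap, two_mul]
    _ ≤ 2 * (B * ∫⁻ x, ‖f x‖ₑ ^ 2 ∂μ) := by
        gcongr
        exact lintegral_enorm_sq_mul_kernel_le hf hk hB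

lemma MeasureTheory.MemLp.lintegral_enorm_sq {α E : Type*} [MeasurableSpace α]
    [NormedAddCommGroup E] {μ : Measure α} {f : α → E} (hf : MemLp f 2 μ) :
    ∫⁻ x, ‖f x‖ₑ ^ 2 ∂μ = ENNReal.ofReal (∫ x, ‖f x‖ ^ 2 ∂μ) := by
  rw [ofReal_integral_eq_lintegral_ofReal (hf.integrable_norm_pow two_ne_zero)
    (ae_of_all _ fun x => sq_nonneg ‖f x‖)]
  simp_rw [ENNReal.ofReal_pow (norm_nonneg _), ofReal_norm]

lemma setIntegral_closedBall_le_exp_pi_mul_integral_gaussian {E : Type*} [NormedAddCommGroup E]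
    [MeasurableSpace E] [OpensMeasurableSpace E] [ProperSpace E] {ν : Measure E}
    [IsFiniteMeasureOnCompacts ν] {R : ℝ} (hR : 0 < R) {h : E → ℝ} (hh : Continuous h)
    (h0 : ∀ ξ, 0 ≤ h ξ) (hint : Integrable (fun ξ => rexp (-(π / R ^ 2) * ‖ξ‖ ^ 2) * h ξ) ν) :
    ∫ ξ in closedBall 0 R, h ξ ∂ν ≤ rexp π * ∫ ξ, rexp (-(π / R ^ 2) * ‖ξ‖ ^ 2) * h ξ ∂ν := by
  have hpt : ∀ ξ ∈ closedBall (0 : E) R, h ξ ≤ rexp π * (rexp (-(π / R ^ 2) * ‖ξ‖ ^ 2) * h ξ) := by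
    intro ξ hξ
    have hξR : ‖ξ‖ ^ 2 ≤ R ^ 2 :=
      pow_le_pow_left₀ (norm_nonneg _) (mem_closedBall_zero_iff.mp hξ) 2
    have hweight : 1 ≤ rexp π * rexp (-(π / R ^ 2) * ‖ξ‖ ^ 2) := by
      rw [← Real.exp_add]
      refine Real.one_le_exp ?_
      have : π / R ^ 2 * ‖ξ‖ ^ 2 ≤ π / R ^ 2 * R ^ 2 := by gcongr
      rw [div_mul_cancel₀ _ (by positivity)] at this
      linarith
    nlinarith [h0 ξ]
  calc ∫ ξ in closedBall 0 R, h ξ ∂ν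
      ≤ ∫ ξ in closedBall 0 R, rexp π * (rexp (-(π / R ^ 2) * ‖ξ‖ ^ 2) * h ξ) ∂ν :=
        setIntegral_mono_on (hh.continuousOn.integrableOn_compact (isCompact_closedBall _ _))
          (hint.const_mul _).integrableOn measurableSet_closedBall hpt
    _ ≤ ∫ ξ, rexp π * (rexp (-(π / R ^ 2) * ‖ξ‖ ^ 2) * h ξ) ∂ν :=
        setIntegral_le_integral (hint.const_mul _)
          (ae_of_all _ fun ξ => mul_nonneg (exp_pos _).le (mul_nonneg (exp_pos _).le (h0 ξ)))
    _ = _ := integral_const_mul _ _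

section FourierTransform

variable {d : ℕ} {μ : Measure (Euc d)} {f : Euc d → ℂ}

lemma norm_ftF_le (ξ : Euc d) : ‖ftF μ f ξ‖ ≤ ∫ x, ‖f x‖ ∂μ :=
  (norm_integral_le_integral_norm _).trans_eq (by simp_rw [norm_mul, norm_eC, one_mul])

lemma continuous_ftF (hf : Integrable f μ) : Continuous (ftF μ f) :=
  continuous_of_dominated
    (fun _ => ((by fun_prop : Continuous fun x : Euc d => eC (-⟪x, _⟫)).aestronglyMeasurable).mul
      hf.aestronglyMeasurable)
    (fun _ => ae_of_all _ fun x => by rw [norm_mul, norm_eC, one_mul]) hf.norm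
    (ae_of_all _ fun _ => by fun_prop)

lemma ftF_mul_conj [SFinite μ] (ξ : Euc d) :
    ftF μ f ξ * starRingEnd ℂ (ftF μ f ξ)
      = ∫ p, eC (-⟪p.1 - p.2, ξ⟫) * (f p.1 * starRingEnd ℂ (f p.2)) ∂(μ.prod μ) := by
  rw [ftF, ← integral_conj, ← integral_prod_mul]
  congr 1 with p
  rw [map_mul, conj_eC, inner_sub_left, sub_eq_add_neg, neg_add, ← neg_neg (-⟪p.2, ξ⟫),
    ← eC_mul_eC]
  ring

lemma integral_mul_ftF_mul_conj [SFinite μ] (hf : Integrable f μ) {w : Euc d → ℂ}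
    (hw : Integrable w) :
    ∫ ξ, w ξ * (ftF μ f ξ * starRingEnd ℂ (ftF μ f ξ))
      = ∫ p, f p.1 * starRingEnd ℂ (f p.2) * (∫ ξ, w ξ * eC (-⟪p.1 - p.2, ξ⟫)) ∂(μ.prod μ) := by
  have hint : Integrable (Function.uncurry fun (ξ : Euc d) (p : Euc d × Euc d) =>
      eC (-⟪p.1 - p.2, ξ⟫) * (w ξ * (f p.1 * starRingEnd ℂ (f p.2))))
      (volume.prod (μ.prod μ)) :=
    (hw.mul_prod (hf.mul_prod (Complex.conjCLE.toContinuousLinearMap.integrable_comp hf))).bdd_mul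
      ((by fun_prop : Continuous fun q : Euc d × (Euc d × Euc d) =>
        eC (-⟪q.2.1 - q.2.2, q.1⟫)).aestronglyMeasurable)
      (ae_of_all _ fun q => (norm_eC _).le)
  calc ∫ ξ, w ξ * (ftF μ f ξ * starRingEnd ℂ (ftF μ f ξ))
      = ∫ ξ, (∫ p, eC (-⟪p.1 - p.2, ξ⟫) * (w ξ * (f p.1 * starRingEnd ℂ (f p.2))) ∂(μ.prod μ)) := by
        congr 1 with ξ
        rw [ftF_mul_conj, ← integral_const_mul]
        congr 1 with p
        ring
    _ = ∫ p, (∫ ξ, eC (-⟪p.1 - p.2, ξ⟫) * (w ξ * (f p.1 * starRingEnd ℂ (f p.2)))) ∂(μ.prod μ) :=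
        integral_integral_swap hint
    _ = _ := by
        congr 1 with p
        rw [← integral_const_mul]
        congr 1 with ξ
        ring

end FourierTransform

section GaussianEnergy

variable {d : ℕ} {μ : Measure (Euc d)} {f : Euc d → ℂ} {R : ℝ}

lemma integrable_gaussian (hR : 0 < R) :
    Integrable fun ξ : Euc d => rexp (-(π / R ^ 2) * ‖ξ‖ ^ 2) :=
  Integrable.of_integral_ne_zero <| by
    rw [GaussianFourier.integral_rexp_neg_mul_sq_norm (by positivity)]
    positivity

lemma integrable_gaussian_mul_norm_ftF_sq (hf : Integrable f μ) (hR : 0 < R) :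
    Integrable fun ξ => rexp (-(π / R ^ 2) * ‖ξ‖ ^ 2) * ‖ftF μ f ξ‖ ^ 2 :=
  (integrable_gaussian hR).mul_bdd ((continuous_ftF hf).norm.pow 2).aestronglyMeasurable
    (ae_of_all _ fun ξ => by
      rw [norm_pow, norm_norm]
      exact pow_le_pow_left₀ (norm_nonneg _) (norm_ftF_le ξ) 2)

lemma integral_gaussian_mul_norm_ftF_sq [SFinite μ] (hf : Integrable f μ) (hR : 0 < R) :
    ((∫ ξ, rexp (-(π / R ^ 2) * ‖ξ‖ ^ 2) * ‖ftF μ f ξ‖ ^ 2 : ℝ) : ℂ)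
      = ∫ p, f p.1 * starRingEnd ℂ (f p.2)
          * ((R ^ d : ℝ) * Complex.exp (-(π * R ^ 2 * ‖p.1 - p.2‖ ^ 2) : ℝ)) ∂(μ.prod μ) := by
  rw [← integral_complex_ofReal]
  calc ∫ ξ, ((rexp (-(π / R ^ 2) * ‖ξ‖ ^ 2) * ‖ftF μ f ξ‖ ^ 2 : ℝ) : ℂ)
      = ∫ ξ, (rexp (-(π / R ^ 2) * ‖ξ‖ ^ 2) : ℂ) * (ftF μ f ξ * starRingEnd ℂ (ftF μ f ξ)) := by
        congr 1 with ξ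
        rw [Complex.mul_conj']
        push_cast
        rfl
    _ = _ := integral_mul_ftF_mul_conj hf (integrable_gaussian hR).ofReal
    _ = _ := by simp_rw [integral_gaussian_mul_eC d hR]

lemma integral_gaussian_mul_norm_ftF_sq_le [IsFiniteMeasure μ] {s C : ℝ} (hC : 0 ≤ C)
    (hfrost : ∀ (x : Euc d) (r : ℝ), 0 < r → μ (closedBall x r) ≤ ENNReal.ofReal (C * r ^ s))
    (hf : MemLp f 2 μ) (hR : 0 < R) :
    ∫ ξ, rexp (-(π / R ^ 2) * ‖ξ‖ ^ 2) * ‖ftF μ f ξ‖ ^ 2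
      ≤ R ^ d * (C * gaussianLayerSum s / R ^ s) * ∫ x, ‖f x‖ ^ 2 ∂μ := by
  set k : Euc d → Euc d → ℝ≥0∞ := fun x y => ENNReal.ofReal (rexp (-(π * R ^ 2 * dist x y ^ 2)))
  have hk : Measurable (Function.uncurry k) :=
    ENNReal.measurable_ofReal.comp (by fun_prop : Continuous fun p : Euc d × Euc d =>
      rexp (-(π * R ^ 2 * dist p.1 p.2 ^ 2))).measurable
  have hJ : 0 ≤ ∫ ξ, rexp (-(π / R ^ 2) * ‖ξ‖ ^ 2) * ‖ftF μ f ξ‖ ^ 2 :=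
    integral_nonneg fun ξ => mul_nonneg (exp_pos _).le (sq_nonneg _)
  have hCS : 0 ≤ C * gaussianLayerSum s / R ^ s :=
    div_nonneg (mul_nonneg hC (zero_le_one.trans (one_le_gaussianLayerSum s))) (by positivity)
  rw [← ENNReal.ofReal_le_ofReal_iff
    (mul_nonneg (mul_nonneg (by positivity) hCS) (integral_nonneg fun x => sq_nonneg ‖f x‖))]
  calc ENNReal.ofReal (∫ ξ, rexp (-(π / R ^ 2) * ‖ξ‖ ^ 2) * ‖ftF μ f ξ‖ ^ 2)
      = ‖((∫ ξ, rexp (-(π / R ^ 2) * ‖ξ‖ ^ 2) * ‖ftF μ f ξ‖ ^ 2 : ℝ) : ℂ)‖ₑ := by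
        rw [← ofReal_norm, Complex.norm_of_nonneg hJ]
    _ ≤ ∫⁻ p, ‖f p.1 * starRingEnd ℂ (f p.2)
          * ((R ^ d : ℝ) * Complex.exp (-(π * R ^ 2 * ‖p.1 - p.2‖ ^ 2) : ℝ))‖ₑ ∂(μ.prod μ) := by
        rw [integral_gaussian_mul_norm_ftF_sq (hf.integrable one_le_two) hR]
        exact enorm_integral_le_lintegral_enorm _
    _ = ENNReal.ofReal (R ^ d) * ∫⁻ p, ‖f p.1‖ₑ * ‖f p.2‖ₑ * k p.1 p.2 ∂(μ.prod μ) := by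
        rw [← lintegral_const_mul' _ _ ENNReal.ofReal_ne_top]
        congr 1 with p
        have hkernel : ‖((R ^ d * rexp (-(π * R ^ 2 * ‖p.1 - p.2‖ ^ 2)) : ℝ) : ℂ)‖ₑ
            = ENNReal.ofReal (R ^ d) * k p.1 p.2 := by
          rw [← ofReal_norm, Complex.norm_real, Real.norm_of_nonneg (by positivity),
            ENNReal.ofReal_mul (by positivity)]
          simp only [k, dist_eq_norm]
        rw [← Complex.ofReal_exp, ← Complex.ofReal_mul, enorm_mul, enorm_mul, RCLike.enorm_conj,
          hkernel]
        ring
    _ ≤ ENNReal.ofReal (R ^ d) * (ENNReal.ofReal (C * gaussianLayerSum s / R ^ s)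
          * ENNReal.ofReal (∫ x, ‖f x‖ ^ 2 ∂μ)) := by
        rw [← hf.lintegral_enorm_sq]
        exact mul_le_mul_right (lintegral_enorm_mul_enorm_mul_kernel_le hf.1 hk
          (fun x y => by simp only [k, dist_comm])
          (lintegral_gaussian_le_of_frostman hC hfrost hR)) _
    _ = _ := by
        rw [← ENNReal.ofReal_mul hCS, ← ENNReal.ofReal_mul (by positivity)]
        ring_nf

lemma setIntegral_closedBall_norm_ftF_sq_le [IsFiniteMeasure μ] {s C : ℝ} (hC : 0 ≤ C)
    (hfrost : ∀ (x : Euc d) (r : ℝ), 0 < r → μ (closedBall x r) ≤ ENNReal.ofReal (C * r ^ s))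
    (hf : MemLp f 2 μ) (hR : 0 < R) :
    ∫ ξ in closedBall (0 : Euc d) R, ‖ftF μ f ξ‖ ^ 2
      ≤ rexp π * C * gaussianLayerSum s * R ^ ((d : ℝ) - s) * ∫ x, ‖f x‖ ^ 2 ∂μ :=
  calc ∫ ξ in closedBall (0 : Euc d) R, ‖ftF μ f ξ‖ ^ 2
      ≤ rexp π * ∫ ξ, rexp (-(π / R ^ 2) * ‖ξ‖ ^ 2) * ‖ftF μ f ξ‖ ^ 2 :=
        setIntegral_closedBall_le_exp_pi_mul_integral_gaussian hR
          ((continuous_ftF (hf.integrable one_le_two)).norm.pow 2) (fun _ => sq_nonneg _)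
          (integrable_gaussian_mul_norm_ftF_sq (hf.integrable one_le_two) hR)
    _ ≤ rexp π * (R ^ d * (C * gaussianLayerSum s / R ^ s) * ∫ x, ‖f x‖ ^ 2 ∂μ) := by
        gcongr
        exact integral_gaussian_mul_norm_ftF_sq_le hC hfrost hf hR
    _ = _ := by
        rw [Real.rpow_sub hR, Real.rpow_natCast]
        ring

end GaussianEnergy

theorem stmt1_general (d : ℕ) (μ : Measure (Euc d)) [IsProbabilityMeasure μ]
    (s C : ℝ) (hC : 0 < C)
    (hfrost : ∀ (x : Euc d) (r : ℝ), 0 < r →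
      μ (closedBall x r) ≤ ENNReal.ofReal (C * r ^ s)) :
    ∃ C' > 0, ∀ (f : Euc d → ℂ), MemLp f 2 μ → ∀ R ≥ (1:ℝ),
      ∫ ξ in closedBall (0 : Euc d) R, ‖ftF μ f ξ‖ ^ 2
        ≤ C' * R ^ ((d : ℝ) - s) * ∫ x, ‖f x‖ ^ 2 ∂μ :=
  ⟨rexp π * C * gaussianLayerSum s,
    mul_pos (mul_pos (exp_pos π) hC) (zero_lt_one.trans_le (one_le_gaussianLayerSum s)),
    fun _ hf _ hR =>
      setIntegral_closedBall_norm_ftF_sq_le hC.le hfrost hf (zero_lt_one.trans_le hR)⟩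

/-- If `μ` is a compactly supported probability measure with
`μ(B(x,r)) ≤ C r^s`, then `∫_{|ξ|≤R} |(f dμ)^∧|² ≲ R^{d-s} ‖f‖²_{L²(μ)}` for `R ≥ 1`. -/
theorem stmt1 (d : ℕ) (μ : Measure (Euc d)) [IsProbabilityMeasure μ]
    (K : Set (Euc d)) (hK : IsCompact K) (hsupp : μ Kᶜ = 0)
    (s C : ℝ) (hs0 : 0 < s) (hsd : s ≤ d) (hC : 0 < C)
    (hfrost : ∀ (x : Euc d) (r : ℝ), 0 < r →
      μ (closedBall x r) ≤ ENNReal.ofReal (C * r ^ s)) :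
    ∃ C' > 0, ∀ (f : Euc d → ℂ), MemLp f 2 μ → ∀ R ≥ (1:ℝ),
      ∫ ξ in closedBall (0 : Euc d) R, ‖ftF μ f ξ‖ ^ 2
        ≤ C' * R ^ ((d : ℝ) - s) * ∫ x, ‖f x‖ ^ 2 ∂μ :=
  stmt1_general d μ s C hC hfrost
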